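/- Let F be a field of characteristic p > 0 and V = F^n. Let H = ker(l_H) be a hyperplane, σ ∈ GL(V) a diagonalizable reflection about H with ω = det(σ), and let t_1, …, t_k be transvections about H with root vectors α_1, …, α_k. Then a vector α ∈ H is the root vector of a transvection about H lying in the group ⟨σ, t_1, …, t_k⟩ (or α = 0) if and only if α lies in the F_p(ω)-span of α_1, …, α_k. In other words, the set of root vectors of the elements of K ∩ ⟨σ, t_1, …, t_k⟩, where K is the subgroup generated by the transvections, equals the F_p(ω)-span of α_1, …, α_k. -/

import Mathlib

open Matrix

/-- `α` is the root vector of `g` with respect to the linear form `v ↦ ∑ i, c i * v i`: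
`g v = v + l(v) • α` for all `v`.  In particular `g` fixes the hyperplane `ker l` pointwise. -/
def IsRootVec {F : Type*} [Field F] {n : ℕ} (c : Fin n → F) (g : GL (Fin n) F)
    (α : Fin n → F) : Prop :=
  ∀ v : Fin n → F, (g : Matrix (Fin n) (Fin n) F).mulVec v = v + (∑ i, c i * v i) • α

/-- `g` is a transvection about the hyperplane defined by `c`:
its root vector is nonzero and lies in the hyperplane. -/
def IsTransvection {F : Type*} [Field F] {n : ℕ} (c : Fin n → F) (g : GL (Fin n) F) : Prop :=
  ∃ α : Fin n → F, α ≠ 0 ∧ (∑ i, c i * α i) = 0 ∧ IsRootVec c g α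

/-- `g` is a diagonalizable reflection about the hyperplane defined by `c`
(the identity is allowed): its root vector does not lie in the hyperplane, or is zero. -/
def IsDiagReflection {F : Type*} [Field F] {n : ℕ} (c : Fin n → F) (g : GL (Fin n) F) : Prop :=
  ∃ α : Fin n → F, IsRootVec c g α ∧ (α = 0 ∨ (∑ i, c i * α i) ≠ 0)

section Aux

variable {F : Type*} [Field F] {n : ℕ} {c : Fin n → F} {g h : GL (Fin n) F} {α β : Fin n → F}

lemma rootvec_mul (hg : IsRootVec c g α) (hh : IsRootVec c h β) :
    IsRootVec c (g * h) (β + (1 + c ⬝ᵥ β) • α) := by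
  intro v
  have : ((g * h : GL (Fin n) F) : Matrix (Fin n) (Fin n) F) =
      (g : Matrix (Fin n) (Fin n) F) * (h : Matrix (Fin n) (Fin n) F) := rfl
  rw [this, ← Matrix.mulVec_mulVec, hh v, Matrix.mulVec_add, Matrix.mulVec_smul, hg, hg]
  show v + (c ⬝ᵥ v) • α + (c ⬝ᵥ v) • (β + (c ⬝ᵥ β) • α) = v + (c ⬝ᵥ v) • (β + (1 + c ⬝ᵥ β) • α)
  module

lemma rootvec_one : IsRootVec c 1 (0 : Fin n → F) := by
  intro v; simp

lemma rootvec_matrix_eq (hg : IsRootVec c g α) :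
    (g : Matrix (Fin n) (Fin n) F) = 1 + replicateCol Unit α * replicateRow Unit c := by
  ext i j
  have h1 := congrFun (hg (Pi.single j 1)) i
  rw [Matrix.mulVec_single_one] at h1
  simp only [Matrix.col_apply] at h1
  rw [h1]
  simp [Matrix.one_apply, Matrix.mul_apply, Matrix.replicateCol, Matrix.replicateRow, dotProduct_single,
    Pi.single_apply, mul_comm]

lemma det_rootvec (hg : IsRootVec c g α) :
    Matrix.det (g : Matrix (Fin n) (Fin n) F) = 1 + c ⬝ᵥ α := by
  rw [rootvec_matrix_eq hg, Matrix.det_one_add_replicateCol_mul_replicateRow]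

lemma one_add_dot_ne_zero (hg : IsRootVec c g α) : 1 + c ⬝ᵥ α ≠ 0 := by
  rw [← det_rootvec hg]
  exact ((Matrix.isUnit_iff_isUnit_det _).mp g.isUnit).ne_zero

lemma rootvec_inv (hg : IsRootVec c g α) :
    IsRootVec c g⁻¹ ((-(1 + c ⬝ᵥ α)⁻¹) • α) := by
  have hd : (1 + c ⬝ᵥ α) ≠ 0 := one_add_dot_ne_zero hg
  intro v
  set w : Fin n → F := v + (c ⬝ᵥ v) • ((-(1 + c ⬝ᵥ α)⁻¹) • α) with hw
  have hgw : (g : Matrix (Fin n) (Fin n) F).mulVec w = v := by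
    rw [hg w]
    show w + (c ⬝ᵥ w) • α = v
    have hcw : c ⬝ᵥ w = (c ⬝ᵥ v) * (1 + c ⬝ᵥ α)⁻¹ := by
      rw [hw]
      simp only [dotProduct_add, dotProduct_smul, smul_eq_mul]
      field_simp
      ring
    rw [hcw, hw]
    have : (c ⬝ᵥ v * (1 + c ⬝ᵥ α)⁻¹) • α = (c ⬝ᵥ v) • ((1 + c ⬝ᵥ α)⁻¹ • α) := by
      rw [smul_smul]
    rw [this]
    module
  calc ((g⁻¹ : GL (Fin n) F) : Matrix (Fin n) (Fin n) F).mulVec v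
      = ((g⁻¹ : GL (Fin n) F) : Matrix (Fin n) (Fin n) F).mulVec
          ((g : Matrix (Fin n) (Fin n) F).mulVec w) := by rw [hgw]
    _ = (((g⁻¹ * g : GL (Fin n) F)) : Matrix (Fin n) (Fin n) F).mulVec w := by
          rw [Matrix.mulVec_mulVec]; rfl
    _ = w := by rw [inv_mul_cancel g]; simp

lemma rootvec_unique (hc : c ≠ 0) (h1 : IsRootVec c g α) (h2 : IsRootVec c g β) : α = β := by
  obtain ⟨i, hi⟩ : ∃ i, c i ≠ 0 := by
    by_contra hcon
    push_neg at hcon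
    exact hc (funext hcon)
  have heq := (h1 (Pi.single i (1 : F))).symm.trans (h2 (Pi.single i (1 : F)))
  have hci : (∑ j, c j * (Pi.single i (1 : F) : Fin n → F) j) = c i := by
    simp [Pi.single_apply, Finset.sum_ite_eq]
  rw [hci] at heq
  exact smul_right_injective _ hi (add_left_cancel heq)

lemma transvection_dot_eq_zero (hc : c ≠ 0) (htr : IsTransvection c g)
    (hr : IsRootVec c g α) : c ⬝ᵥ α = 0 ∧ α ≠ 0 := by
  obtain ⟨β, hβ0, hβl, hβroot⟩ := htr
  have hβα : α = β := rootvec_unique hc hr hβroot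
  subst hβα
  exact ⟨hβl, hβ0⟩

lemma subfield_closure_le_subring_closure {p : ℕ} [CharP F p]
    (hp : p.Prime) {ω : F} {d : ℕ} (hd : 0 < d) (hωd : ω ^ d = 1) :
    ∀ x ∈ Subfield.closure {ω}, x ∈ Subring.closure ({ω} : Set F) := by
  haveI : Fact p.Prime := ⟨hp⟩
  letI : Algebra (ZMod p) F := ZMod.algebra _ _
  have hint : IsIntegral (ZMod p) ω := by
    refine ⟨Polynomial.X ^ d - Polynomial.C 1, Polynomial.monic_X_pow_sub_C 1 hd.ne', ?_⟩
    simp [Polynomial.eval₂_sub, hωd]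
  let A : Subalgebra (ZMod p) F :=
    { Subring.closure ({ω} : Set F) with
      algebraMap_mem' := by
        intro r
        have : (algebraMap (ZMod p) F) r = ((r.val : ℕ) : F) := by
          rw [← map_natCast (algebraMap (ZMod p) F) r.val, ZMod.natCast_val, ZMod.cast_id]
        rw [this]
        exact natCast_mem (Subring.closure ({ω} : Set F)) r.val }
  intro x hx
  have h1 : x ∈ (IntermediateField.adjoin (ZMod p) {ω}).toSubfield := by
    refine Subfield.closure_le.mpr ?_ hx
    intro y hy
    rw [Set.mem_singleton_iff] at hy
    subst hy
    exact IntermediateField.mem_adjoin_simple_self _ _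
  have h2 : x ∈ Algebra.adjoin (ZMod p) ({ω} : Set F) := by
    rw [← IntermediateField.adjoin_simple_toSubalgebra_of_isAlgebraic hint.isAlgebraic]
    exact h1
  have h3 : Algebra.adjoin (ZMod p) ({ω} : Set F) ≤ A :=
    Algebra.adjoin_le (by simpa [A] using Subring.subset_closure (Set.mem_singleton ω))
  exact h3 h2

end Aux

/-- From the proof of Lemma 2.1 of Hartmann–Shepler, "Jacobians of reflection groups". -/
theorem rootVectors_of_closure_eq_span {F : Type*} [Field F] {n p : ℕ} [CharP F p]
    (hp : 0 < p)
    (c : Fin n → F) (hc : c ≠ 0)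
    (σ : GL (Fin n) F) (hσfin : IsOfFinOrder σ) (hσ : IsDiagReflection c σ)
    (ω : F) (hω : ω = Matrix.det (σ : Matrix (Fin n) (Fin n) F))
    (k : ℕ) (t : Fin k → GL (Fin n) F) (αv : Fin k → Fin n → F)
    (ht : ∀ i : Fin k, IsOfFinOrder (t i) ∧ IsTransvection c (t i) ∧ IsRootVec c (t i) (αv i)) :
    ∀ α : Fin n → F,
      (α = 0 ∨ ∃ g ∈ Subgroup.closure ({σ} ∪ Set.range t),
          IsTransvection c g ∧ IsRootVec c g α) ↔
        α ∈ Submodule.span (Subfield.closure {ω}) (Set.range αv) := by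
  classical
  obtain ⟨ασ, hασroot, hασ0⟩ := hσ
  have hpp : p.Prime := (CharP.char_is_prime_or_zero F p).resolve_right hp.ne'
  have hdet : ω = 1 + c ⬝ᵥ ασ := by rw [hω, det_rootvec hασroot]
  have hlασ : c ⬝ᵥ ασ = ω - 1 := by rw [hdet]; ring
  have hωne : ω ≠ 0 := by rw [hdet]; exact one_add_dot_ne_zero hασroot
  obtain ⟨d, hd, hσd⟩ := isOfFinOrder_iff_pow_eq_one.mp hσfin
  have hωd : ω ^ d = 1 := by
    rw [hω, ← Matrix.det_pow]
    have hval : ((σ : Matrix (Fin n) (Fin n) F)) ^ d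
        = ((σ ^ d : GL (Fin n) F) : Matrix (Fin n) (Fin n) F) := by
      rw [Units.val_pow_eq_pow_val]
    rw [hval, hσd]
    simp
  have hKR := subfield_closure_le_subring_closure hpp hd hωd (ω := ω)
  set KK := Subfield.closure ({ω} : Set F) with hKK
  have hωKK : ω ∈ KK := Subfield.subset_closure (Set.mem_singleton ω)
  set S := Submodule.span KK (Set.range αv) with hS
  have hSl : ∀ x ∈ S, c ⬝ᵥ x = 0 := by
    intro x hx
    induction hx using Submodule.span_induction with
    | mem x h =>
      obtain ⟨i, rfl⟩ := h
      exact (transvection_dot_eq_zero hc (ht i).2.1 (ht i).2.2).1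
    | zero => simp
    | add x y _ _ hx hy => rw [dotProduct_add, hx, hy, add_zero]
    | smul a x _ hx => rw [Subfield.smul_def, dotProduct_smul, hx, smul_eq_mul, mul_zero]
  have hσmem : σ ∈ Subgroup.closure ({σ} ∪ Set.range t) :=
    Subgroup.subset_closure (Or.inl rfl)
  have htmem : ∀ i, t i ∈ Subgroup.closure ({σ} ∪ Set.range t) :=
    fun i => Subgroup.subset_closure (Or.inr ⟨i, rfl⟩)
  intro α
  constructor
  · rintro (rfl | ⟨g, hgcl, htr, hgroot⟩)
    · exact S.zero_mem
    · obtain ⟨hαl, hα0⟩ := transvection_dot_eq_zero hc htr hgroot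
      have key : ∀ g' ∈ Subgroup.closure ({σ} ∪ Set.range t),
          ∃ x s, x ∈ S ∧ (1 + s * (ω - 1)) ∈ KK ∧ 1 + s * (ω - 1) ≠ 0 ∧
            IsRootVec c g' (x + s • ασ) := by
        intro g' hg'
        induction hg' using Subgroup.closure_induction with
        | mem y hy =>
          rcases hy with hy | ⟨i, rfl⟩
          · rw [Set.mem_singleton_iff] at hy
            subst hy
            refine ⟨0, 1, S.zero_mem, ?_, ?_, by simpa using hασroot⟩
            · rw [show (1 : F) + 1 * (ω - 1) = ω by ring]; exact hωKK
            · rw [show (1 : F) + 1 * (ω - 1) = ω by ring]; exact hωne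
          · exact ⟨αv i, 0, Submodule.subset_span ⟨i, rfl⟩, by simpa using one_mem KK,
              by simp, by simpa using (ht i).2.2⟩
        | one => exact ⟨0, 0, S.zero_mem, by simpa using one_mem KK, by simp,
            by simpa using rootvec_one⟩
        | mul a b ha hb iha ihb =>
          obtain ⟨x, s, hxS, hsK, hsne, hroota⟩ := iha
          obtain ⟨y, r, hyS, hrK, hrne, hrootb⟩ := ihb
          have hlb : c ⬝ᵥ (y + r • ασ) = r * (ω - 1) := by
            rw [dotProduct_add, hSl y hyS, dotProduct_smul, hlασ, smul_eq_mul, zero_add]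
          have hmulK : (1 : F) + (r + (1 + r * (ω - 1)) * s) * (ω - 1)
              = (1 + r * (ω - 1)) * (1 + s * (ω - 1)) := by ring
          refine ⟨y + (1 + r * (ω - 1)) • x, r + (1 + r * (ω - 1)) * s, ?_, ?_, ?_, ?_⟩
          · have hsm := S.smul_mem (⟨1 + r * (ω - 1), hrK⟩ : KK) hxS
            rw [Subfield.smul_def] at hsm
            exact S.add_mem hyS hsm
          · rw [hmulK]; exact mul_mem hrK hsK
          · rw [hmulK]; exact mul_ne_zero hrne hsne
          · have h := rootvec_mul hroota hrootb
            rw [hlb] at h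
            have hvec : (y + r • ασ) + (1 + r * (ω - 1)) • (x + s • ασ)
                = (y + (1 + r * (ω - 1)) • x) + (r + (1 + r * (ω - 1)) * s) • ασ := by
              module
            rw [hvec] at h
            exact h
        | inv a ha iha =>
          obtain ⟨x, s, hxS, hsK, hsne, hroot⟩ := iha
          have hla : c ⬝ᵥ (x + s • ασ) = s * (ω - 1) := by
            rw [dotProduct_add, hSl x hxS, dotProduct_smul, hlασ, smul_eq_mul, zero_add]
          have h := rootvec_inv hroot
          rw [hla] at h
          have hinvK : (1 : F) + (-((1 + s * (ω - 1))⁻¹ * s)) * (ω - 1)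
              = (1 + s * (ω - 1))⁻¹ := by
            field_simp
            ring
          refine ⟨(-(1 + s * (ω - 1))⁻¹) • x, -((1 + s * (ω - 1))⁻¹ * s), ?_, ?_, ?_, ?_⟩
          · have hsm := S.smul_mem (⟨-(1 + s * (ω - 1))⁻¹,
              neg_mem (inv_mem hsK)⟩ : KK) hxS
            rw [Subfield.smul_def] at hsm
            exact hsm
          · rw [hinvK]; exact inv_mem hsK
          · rw [hinvK]; exact inv_ne_zero hsne
          · have hvec : (-(1 + s * (ω - 1))⁻¹) • (x + s • ασ)
                = (-(1 + s * (ω - 1))⁻¹) • x + (-((1 + s * (ω - 1))⁻¹ * s)) • ασ := by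
              module
            rw [hvec] at h
            exact h
      obtain ⟨x, s, hxS, hsK, hsne, hroot⟩ := key g hgcl
      have hαx : α = x + s • ασ := rootvec_unique hc hgroot hroot
      have hsz : s * (ω - 1) = 0 := by
        have h0 : c ⬝ᵥ (x + s • ασ) = s * (ω - 1) := by
          rw [dotProduct_add, hSl x hxS, dotProduct_smul, hlασ, smul_eq_mul, zero_add]
        rw [← hαx, hαl] at h0
        exact h0.symm
      have hzero : s • ασ = 0 := by
        rcases mul_eq_zero.mp hsz with h | h
        · rw [h, zero_smul]
        · have hω1 : ω = 1 := sub_eq_zero.mp h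
          have hσ0 : c ⬝ᵥ ασ = 0 := by rw [hlασ, hω1, sub_self]
          rcases hασ0 with h0 | hne
          · rw [h0, smul_zero]
          · exact absurd hσ0 hne
      rw [hαx, hzero, add_zero]
      exact hxS
  · intro hα
    set CL := Subgroup.closure ({σ} ∪ Set.range t) with hCL
    let R : (Fin n → F) → Prop := fun β =>
      β = 0 ∨ ∃ g ∈ CL, IsTransvection c g ∧ IsRootVec c g β
    have hRroot : ∀ (β : Fin n → F) (g : GL (Fin n) F), g ∈ CL → IsRootVec c g β →
        c ⬝ᵥ β = 0 → R β := by
      intro β g hg hr hl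
      by_cases hβ : β = 0
      · exact Or.inl hβ
      · exact Or.inr ⟨g, hg, ⟨β, hβ, hl, hr⟩, hr⟩
    have hRadd : ∀ β γ, R β → R γ → R (β + γ) := by
      rintro β γ (rfl | ⟨g, hg, htr, hr⟩) hγ
      · simpa using hγ
      rcases hγ with rfl | ⟨g', hg', htr', hr'⟩
      · simpa using Or.inr ⟨g, hg, htr, hr⟩
      · have hlβ : c ⬝ᵥ β = 0 := (transvection_dot_eq_zero hc htr hr).1
        have hlγ : c ⬝ᵥ γ = 0 := (transvection_dot_eq_zero hc htr' hr').1
        have h := rootvec_mul hr hr'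
        have hvec : γ + (1 + c ⬝ᵥ γ) • β = β + γ := by
          rw [hlγ]; module
        rw [hvec] at h
        exact hRroot _ _ (mul_mem hg hg') h (by rw [dotProduct_add, hlβ, hlγ, add_zero])
    have hRneg : ∀ β, R β → R (-β) := by
      rintro β (rfl | ⟨g, hg, htr, hr⟩)
      · rw [neg_zero]; exact Or.inl rfl
      · have hlβ : c ⬝ᵥ β = 0 := (transvection_dot_eq_zero hc htr hr).1
        have h := rootvec_inv hr
        have hvec : (-(1 + c ⬝ᵥ β)⁻¹) • β = -β := by
          rw [hlβ]; norm_num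
        rw [hvec] at h
        exact hRroot _ _ (inv_mem hg) h (by rw [dotProduct_neg, hlβ, neg_zero])
    have hRω : ∀ β, R β → R (ω • β) := by
      rintro β (rfl | ⟨g, hg, htr, hr⟩)
      · rw [smul_zero]; exact Or.inl rfl
      · have hlβ : c ⬝ᵥ β = 0 := (transvection_dot_eq_zero hc htr hr).1
        have h1 := rootvec_mul (rootvec_inv hασroot) hr
        have h2 := rootvec_mul h1 hασroot
        have hvec : ασ + (1 + c ⬝ᵥ ασ) • (β + (1 + c ⬝ᵥ β) •
            ((-(1 + c ⬝ᵥ ασ)⁻¹) • ασ)) = ω • β := by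
          rw [hlβ, ← hdet]
          have hinv : ω * ω⁻¹ = 1 := mul_inv_cancel₀ hωne
          funext j
          simp only [Pi.add_apply, Pi.smul_apply, Pi.neg_apply, smul_eq_mul]
          field_simp
          ring
        rw [hvec] at h2
        refine hRroot _ _ ?_ h2 (by rw [dotProduct_smul, hlβ, smul_eq_mul, mul_zero])
        exact mul_mem (mul_mem (inv_mem hσmem) hg) hσmem
    have hRsmul : ∀ z ∈ Subring.closure ({ω} : Set F), ∀ β, R β → R (z • β) := by
      intro z hz
      induction hz using Subring.closure_induction with
      | mem y hy =>
        rw [Set.mem_singleton_iff] at hy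
        subst hy
        exact hRω
      | zero => intro β _; exact Or.inl (zero_smul F β)
      | one => intro β hβ; simpa using hβ
      | add y z _ _ hy hz =>
        intro β hβ
        rw [add_smul]
        exact hRadd _ _ (hy β hβ) (hz β hβ)
      | neg y _ hy =>
        intro β hβ
        rw [neg_smul]
        exact hRneg _ (hy β hβ)
      | mul y z _ _ hy hz =>
        intro β hβ
        rw [mul_smul]
        exact hy _ (hz β hβ)
    show R α
    induction hα using Submodule.span_induction with
    | mem x h =>
      obtain ⟨i, rfl⟩ := h
      exact Or.inr ⟨t i, htmem i, (ht i).2.1, (ht i).2.2⟩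
    | zero => exact Or.inl rfl
    | add x y _ _ hx hy => exact hRadd _ _ hx hy
    | smul a x _ hx =>
      rw [Subfield.smul_def]
      exact hRsmul _ (hKR _ a.2) _ hx
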